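/- For the Mayer–Vietoris double complex of a 2-dimensional alpha complex A(X) with grid cover U, the terms C_{p,q}(A(X),U) vanish for all q ≥ 3, and also vanish whenever q ≥ 1 and p + q ≥ 5. -/

import Mathlib

/-!
If `τ` lies in `K_j` for every `j ∈ J`, each `j` has a vertex in its zone `Z j` on some
triangle of `D` containing `τ`; as every vertex lies in a single zone, `#J` is at most the
number of vertices on the triangles containing `τ`. Each of them has `3 - #τ` vertices outside
`τ`. If `τ` is a triangle it is the only one, giving `#J ≤ 3`; if `τ` is an edge there are at
most two of them, giving `#J ≤ 4`; and `τ`, lying in a triangle, has at most three vertices.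
-/

/-- The cover element `K_i`: all triangles of the Delaunay triangulation `D` having at
least one vertex in the zone `X_i = Z i`, together with their faces. -/
def KCov {V : Type*} {M : ℕ} (D : Finset (Finset V)) (Z : Fin M → Finset V) (i : Fin M) :
    Set (Finset V) :=
  {σ | σ.Nonempty ∧ ∃ t, t ∈ D ∧ t.card = 3 ∧ (∃ v ∈ t, v ∈ Z i) ∧ σ ⊆ t}

open Finset

section

variable {V : Type*}

theorem card_le_card_of_forall_exists_mem_zone {ι : Type*} (Z : ι → Finset V)
    {J : Finset ι} {S : Finset V} (hS : ∀ v ∈ S, {i | v ∈ Z i}.Subsingleton)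
    (hJ : ∀ j ∈ J, ∃ v ∈ S, v ∈ Z j) : #J ≤ #S :=
  card_le_card_of_forall_subsingleton (fun j v => v ∈ Z j) (fun j hj => by simpa using hJ j hj)
    fun v hv _ hi _ hi' => hS v hv hi.2 hi'.2

theorem card_le_three_of_mem_KCov {M : ℕ} {D : Finset (Finset V)} {Z : Fin M → Finset V}
    {i : Fin M} {τ : Finset V} (hτ : τ ∈ KCov D Z i) : #τ ≤ 3 := by
  obtain ⟨-, t, -, ht, -, hτt⟩ := hτ
  exact ht ▸ card_le_card hτt

variable [DecidableEq V]

def trianglesContaining (D : Finset (Finset V)) (τ : Finset V) : Finset (Finset V) :=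
  {t ∈ D | #t = 3 ∧ τ ⊆ t}

theorem card_biUnion_trianglesContaining_le (D : Finset (Finset V)) (τ : Finset V) :
    #((trianglesContaining D τ).biUnion id) ≤
      #τ + #(trianglesContaining D τ) * (3 - #τ) := by
  set T := trianglesContaining D τ
  have hsub : T.biUnion id ⊆ τ ∪ T.biUnion (· \ τ) := by
    intro v hv
    obtain ⟨t, ht, hvt⟩ := mem_biUnion.1 hv
    by_cases hvτ : v ∈ τ
    · exact mem_union_left _ hvτ
    · exact mem_union_right _ (mem_biUnion.2 ⟨t, ht, mem_sdiff.2 ⟨hvt, hvτ⟩⟩)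
  have houter : ∑ t ∈ T, #(t \ τ) = #T * (3 - #τ) := by
    refine sum_const_nat fun t ht => ?_
    obtain ⟨-, ht3, hτt⟩ := mem_filter.1 ht
    rw [card_sdiff_of_subset hτt, ht3]
  calc #(T.biUnion id) ≤ #(τ ∪ T.biUnion (· \ τ)) := card_le_card hsub
    _ ≤ #τ + #(T.biUnion (· \ τ)) := card_union_le _ _
    _ ≤ #τ + #T * (3 - #τ) := by grw [card_biUnion_le, houter]

theorem card_trianglesContaining_le_two {D : Finset (Finset V)} {e : Finset V}
    (hplanar : ∀ t₁ t₂ t₃ : Finset V,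
      (t₁ ∈ D ∧ t₁.card = 3 ∧ e ⊆ t₁) →
      (t₂ ∈ D ∧ t₂.card = 3 ∧ e ⊆ t₂) →
      (t₃ ∈ D ∧ t₃.card = 3 ∧ e ⊆ t₃) →
      t₁ = t₂ ∨ t₁ = t₃ ∨ t₂ = t₃) :
    #(trianglesContaining D e) ≤ 2 := by
  by_contra! h
  obtain ⟨t₁, h₁, t₂, h₂, t₃, h₃, h₁₂, h₁₃, h₂₃⟩ := two_lt_card.1 h
  simp only [trianglesContaining, mem_filter] at h₁ h₂ h₃
  rcases hplanar t₁ t₂ t₃ h₁ h₂ h₃ with h | h | h <;> contradiction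

theorem card_le_card_biUnion_trianglesContaining {M : ℕ} {D : Finset (Finset V)}
    {Z : Fin M → Finset V} (hpart : ∀ t ∈ D, ∀ v ∈ t, ∃! i : Fin M, v ∈ Z i)
    {J : Finset (Fin M)} {τ : Finset V} (hτ : ∀ j ∈ J, τ ∈ KCov D Z j) :
    #J ≤ #((trianglesContaining D τ).biUnion id) := by
  refine card_le_card_of_forall_exists_mem_zone Z (fun v hv => ?_) fun j hj => ?_
  · obtain ⟨t, ht, hvt⟩ := mem_biUnion.1 hv
    exact fun i hi i' hi' => (hpart t (mem_filter.1 ht).1 v hvt).unique hi hi'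
  · obtain ⟨-, t, htD, ht3, ⟨v, hvt, hvZ⟩, hτt⟩ := hτ j hj
    exact ⟨v, mem_biUnion.2 ⟨t, mem_filter.2 ⟨htD, ht3, hτt⟩, hvt⟩, hvZ⟩

end

theorem double_complex_terms_vanish {V : Type*} {M : ℕ}
    (D : Finset (Finset V)) (Z : Fin M → Finset V)
    (hpart : ∀ t ∈ D, ∀ v ∈ t, ∃! i : Fin M, v ∈ Z i)
    (hplanar : ∀ e : Finset V, e.card = 2 →
      ∀ t₁ t₂ t₃ : Finset V,
        (t₁ ∈ D ∧ t₁.card = 3 ∧ e ⊆ t₁) →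
        (t₂ ∈ D ∧ t₂.card = 3 ∧ e ⊆ t₂) →
        (t₃ ∈ D ∧ t₃.card = 3 ∧ e ⊆ t₃) →
        t₁ = t₂ ∨ t₁ = t₃ ∨ t₂ = t₃)
    (A : Fin M → Set (Finset V)) (hA : ∀ i, A i ⊆ KCov D Z i) :
    ∀ p q : ℕ, (3 ≤ q ∨ (1 ≤ q ∧ 5 ≤ p + q)) →
      ∀ J : Finset (Fin M), J.card = p + 1 →
        ∀ τ : Finset V, (∀ j ∈ J, τ ∈ A j) → τ.card ≠ q + 1 := by
  classical
  intro p q hpq J hJ τ hτ hτq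
  have hK : ∀ j ∈ J, τ ∈ KCov D Z j := fun j hj => hA j (hτ j hj)
  obtain ⟨j₀, hj₀⟩ : J.Nonempty := card_pos.1 (by omega)
  have hτ3 := card_le_three_of_mem_KCov (hK j₀ hj₀)
  have hJτ := (card_le_card_biUnion_trianglesContaining hpart hK).trans
    (card_biUnion_trianglesContaining_le D τ)
  obtain rfl | rfl : q = 1 ∨ q = 2 := by omega
  · have hT := card_trianglesContaining_le_two (hplanar τ hτq)
    rw [hτq] at hJτ
    omega
  · rw [hτq, Nat.sub_self, mul_zero] at hJτ
    omega
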